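/- Fix m = |M| and k. Consider any deterministic node-oblivious decision rule vector (f, g, h) on the k-ary tree satisfying Assumptions 1, 2 and 3. Then there exists a constant C = C(f, m, k) < ∞ such that for all depths t, the probability of error satisfies P(σ_root ≠ s) ≥ exp(−C·n^ρ), where n = k^t and ρ = 1 + log(1 − k^{−(m−1)})/((m−1)·log k) < 1. -/

import Mathlib

/-!
Node-oblivious deterministic decision rules on the `k`-ary tree: every leaf applies the
same rule `g : X → M` to its private signal (i.i.d. with law `p₀` under `s = 0` and
`p₁` under `s = 1`, both everywhere positive on the finite set `X`), every internal
non-root node applies the same rule `f : Mᵏ → M` to its children's messages, and the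
root applies `h : Mᵏ → Bool`.  The state of the world `s` is uniform on `{0,1}`.

We formalize the subexponential lower bound on the error probability under the three
irreducibility assumptions, in terms of the diameter `d` of the dependence graph.
-/

/-- `p` is an everywhere-positive probability distribution on the finite set `X`. -/
def IsPositiveDist {X : Type} [Fintype X] (p : X → ℝ) : Prop :=
  (∀ x, 0 < p x) ∧ ∑ x, p x = 1

/-- Message distribution at a node of level `τ` (distance `τ` from the leaves) for the
node-oblivious deterministic rule vector with leaf rule `g` and internal rule `f`,
when the private signals are i.i.d. with law `p`. -/
noncomputable def oblDist {X M : Type} [Fintype X] [Fintype M] [DecidableEq M] {k : ℕ}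
    (p : X → ℝ) (g : X → M) (f : (Fin k → M) → M) : ℕ → M → ℝ
  | 0, μ => ∑ x, if g x = μ then p x else 0
  | τ + 1, μ => ∑ σ : Fin k → M, if f σ = μ then ∏ i, oblDist p g f τ (σ i) else 0

/-- Root error probability `P(σ_root ≠ s)` (uniform prior on `s`) for the
node-oblivious protocol `(f, g, h)`; the root's children are at level `t`, so the
total depth is `t + 1` and there are `n = k^(t+1)` private signals. -/
noncomputable def oblErr {X M : Type} [Fintype X] [Fintype M] [DecidableEq M] {k : ℕ}
    (p₀ p₁ : X → ℝ) (g : X → M) (f : (Fin k → M) → M) (h : (Fin k → M) → Bool)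
    (t : ℕ) : ℝ :=
  (1 / 2) * (∑ σ : Fin k → M, if h σ = true then ∏ i, oblDist p₀ g f t (σ i) else 0) +
  (1 / 2) * (∑ σ : Fin k → M, if h σ = false then ∏ i, oblDist p₁ g f t (σ i) else 0)

/-- The dependence graph of `f`: there is a directed edge from `μ` to `ν` iff there is
an input vector `α ∈ Mᵏ` in which `ν` appears at least once and `f α = μ`. -/
def DepEdge {M : Type} {k : ℕ} (f : (Fin k → M) → M) (μ ν : M) : Prop :=
  ∃ α : Fin k → M, (∃ i, α i = ν) ∧ f α = μ

/-- `HasPath f n μ ν`: the dependence graph of `f` contains a directed path with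
exactly `n` edges from `μ` to `ν`. -/
def HasPath {M : Type} {k : ℕ} (f : (Fin k → M) → M) : ℕ → M → M → Prop
  | 0, μ, ν => μ = ν
  | n + 1, μ, ν => ∃ ξ, DepEdge f μ ξ ∧ HasPath f n ξ ν

/-- `d` is the diameter of the dependence graph of `f`: every ordered pair of distinct
vertices is joined by a directed path of length at most `d`, and some ordered pair of
distinct vertices has no directed path of length less than `d`. -/
def IsDiameter {M : Type} {k : ℕ} (f : (Fin k → M) → M) (d : ℕ) : Prop :=
  (∀ μ ν : M, μ ≠ ν → ∃ n, n ≤ d ∧ HasPath f n μ ν) ∧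
  (∃ μ ν : M, μ ≠ ν ∧ ∀ n, n < d → ¬HasPath f n μ ν)


/-!
Let `w τ = oblMin p₀ g f τ` be the smallest probability, under `s = 0`, of a message at level
`τ`. An edge `μ → ν` of the dependence graph means that some input vector containing `ν` is mapped
to `μ`, so along a path of length `j` from `μ` down to `ν` the probability of `μ` is at least that
of `ν` times `w ^ (k - 1)` per level. Every message reaches `μm` by a path of length at most
`D = m - 1`, and `μm` has probability more than `η`, hence
`w (b + D) ≥ η ∏_{i < D} w (b + i) ^ (k - 1)`. For `z = -log w` this is the linear recursion
`z (b + D) ≤ B + (k - 1) ∑_{i < D} z (b + i)`, which `λ = k ^ ρ` strictly dominates because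
`λ ^ D = k ^ D - 1` and `D ≥ 2`; so `z t = O(λ ^ t)`, and `λ ^ (t + 1) = n ^ ρ`. Finally the root
errs with probability at least `w t ^ k / 2` if it ever outputs `1`, and `1 / 2` otherwise.
-/

open Finset Real

section DependenceGraph

variable {M : Type} {k : ℕ} {f : (Fin k → M) → M}

theorem hasPath_iff_exists_seq {n : ℕ} {μ ν : M} :
    HasPath f n μ ν ↔
      ∃ v : ℕ → M, v 0 = μ ∧ v n = ν ∧ ∀ i < n, DepEdge f (v i) (v (i + 1)) := by
  induction n generalizing μ with
  | zero =>
    refine ⟨fun h => ⟨fun _ => μ, rfl, h, by simp⟩, ?_⟩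
    rintro ⟨v, rfl, rfl, -⟩
    rfl
  | succ n ih =>
    simp only [HasPath, ih]
    constructor
    · rintro ⟨ξ, hμξ, v, rfl, hvn, hv⟩
      refine ⟨fun i => Nat.casesOn i μ v, rfl, hvn, ?_⟩
      rintro (_ | i) hi
      · exact hμξ
      · exact hv i (by omega)
    · rintro ⟨v, rfl, hvn, hv⟩
      exact ⟨v 1, hv 0 (by omega), fun i => v (i + 1), rfl, hvn,
        fun i hi => hv (i + 1) (by omega)⟩

theorem hasPath_of_seq_of_eq {v : ℕ → M} {n i j : ℕ}
    (hv : ∀ l < n, DepEdge f (v l) (v (l + 1))) (hij : i < j) (hjn : j ≤ n) (heq : v i = v j) :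
    HasPath f (n - (j - i)) (v 0) (v n) := by
  refine hasPath_iff_exists_seq.2
    ⟨fun l => if l < i then v l else v (l + (j - i)), ?_, ?_, fun l hl => ?_⟩
  · dsimp only
    split_ifs with h
    · rfl
    · obtain rfl : i = 0 := by omega
      simp [heq]
  · dsimp only
    rw [if_neg (by omega), Nat.sub_add_cancel (by omega)]
  · dsimp only
    split_ifs with h₁ h₂ h₂
    · exact hv l (by omega)
    · obtain rfl : i = l + 1 := by omega
      rw [show l + 1 + (j - (l + 1)) = j by omega, ← heq]
      exact hv l (by omega)
    · omega
    · rw [show l + 1 + (j - i) = l + (j - i) + 1 by omega]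
      exact hv _ (by omega)

theorem HasPath.exists_le_card_sub_one [Fintype M] {n : ℕ} {μ ν : M} (hpath : HasPath f n μ ν) :
    ∃ j ≤ Fintype.card M - 1, HasPath f j μ ν := by
  induction n using Nat.strong_induction_on with
  | _ n ih =>
  by_cases hn : n ≤ Fintype.card M - 1
  · exact ⟨n, hn, hpath⟩
  obtain ⟨v, rfl, rfl, hv⟩ := hasPath_iff_exists_seq.1 hpath
  obtain ⟨i, hi, j, hj, hne, heq⟩ := exists_ne_map_eq_of_card_lt_of_maps_to
    (s := range (n + 1)) (t := univ) (f := v) (by simp; omega) (fun _ _ => mem_coe.2 (mem_univ _))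
  rw [mem_range] at hi hj
  wlog hij : i < j generalizing i j
  · exact this j hj i hi hne.symm heq.symm (by omega)
  exact ih _ (by omega) (hasPath_of_seq_of_eq hv hij (by omega) heq)

theorem surjective_of_forall_hasPath [Fintype M] (hM : 1 < Fintype.card M)
    (hconn : ∀ μ ν : M, μ ≠ ν → ∃ n, HasPath f n μ ν) : Function.Surjective f := by
  intro μ
  obtain ⟨ν, hν⟩ := Fintype.exists_ne_of_one_lt_card hM μ
  obtain ⟨_ | n, hpath⟩ := hconn μ ν hν.symm
  · exact absurd hpath hν.symm
  · obtain ⟨_, ⟨α, -, hα⟩, -⟩ := hpath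
    exact ⟨α, hα⟩

theorem exists_hasPath_le_card_sub_one [Fintype M]
    (hconn : ∀ μ ν : M, μ ≠ ν → ∃ n, HasPath f n μ ν) (μ ν : M) :
    ∃ j ≤ Fintype.card M - 1, HasPath f j μ ν := by
  by_cases hμν : μ = ν
  · exact ⟨0, Nat.zero_le _, hμν⟩
  · obtain ⟨_, hpath⟩ := hconn μ ν hμν
    exact hpath.exists_le_card_sub_one

end DependenceGraph

section SumProd

variable {M : Type} [Fintype M] {k : ℕ}

theorem prod_pos_iff_of_nonneg {ι : Type*} [Fintype ι] {a : ι → ℝ} (ha : ∀ i, 0 ≤ a i) :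
    0 < ∏ i, a i ↔ ∀ i, 0 < a i :=
  ⟨fun h i => (ha i).lt_of_ne fun h0 => h.ne' (prod_eq_zero (mem_univ i) h0.symm),
    fun h => prod_pos fun i _ => h i⟩

theorem prod_le_sum_ite_prod {q : M → ℝ} (hq : ∀ μ, 0 ≤ q μ) {P : (Fin k → M) → Prop}
    [DecidablePred P] {σ : Fin k → M} (hσ : P σ) :
    ∏ i, q (σ i) ≤ ∑ σ', if P σ' then ∏ i, q (σ' i) else 0 :=
  (if_pos hσ).symm.trans_le
    (single_le_sum (f := fun σ' => if P σ' then ∏ i, q (σ' i) else 0)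
      (fun _ _ => ite_nonneg (prod_nonneg fun _ _ => hq _) le_rfl) (mem_univ σ))

theorem sum_ite_prod_nonneg {q : M → ℝ} (hq : ∀ μ, 0 ≤ q μ) (P : (Fin k → M) → Prop)
    [DecidablePred P] : 0 ≤ ∑ σ, if P σ then ∏ i, q (σ i) else 0 :=
  sum_nonneg fun _ _ => ite_nonneg (prod_nonneg fun _ _ => hq _) le_rfl

end SumProd

section Distribution

variable {X M : Type} [Fintype X] [Fintype M] [DecidableEq M] {k : ℕ} {p p' : X → ℝ}
  {g : X → M} {f : (Fin k → M) → M}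

theorem oblDist_nonneg (hp : ∀ x, 0 ≤ p x) : ∀ τ μ, 0 ≤ oblDist p g f τ μ
  | 0, _ => sum_nonneg fun x _ => ite_nonneg (hp x) le_rfl
  | τ + 1, μ => sum_ite_prod_nonneg (oblDist_nonneg hp τ) (fun σ => f σ = μ)

theorem sum_oblDist (hp : ∑ x, p x = 1) : ∀ τ, ∑ μ, oblDist p g f τ μ = 1
  | 0 => by
    simp only [oblDist]
    rw [sum_comm]
    simpa using hp
  | τ + 1 => by
    simp only [oblDist]
    rw [sum_comm]
    simp [← Fintype.sum_pow, sum_oblDist hp τ]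

theorem oblDist_le_one (hp : IsPositiveDist p) (τ : ℕ) (μ : M) : oblDist p g f τ μ ≤ 1 :=
  (single_le_sum (f := oblDist p g f τ) (fun ν _ => oblDist_nonneg (fun x => (hp.1 x).le) τ ν)
    (mem_univ μ)).trans_eq (sum_oblDist hp.2 τ)

theorem prod_oblDist_le_oblDist_succ (hp : ∀ x, 0 ≤ p x) (τ : ℕ) (α : Fin k → M) :
    ∏ i, oblDist p g f τ (α i) ≤ oblDist p g f (τ + 1) (f α) := by
  simp only [oblDist]
  exact prod_le_sum_ite_prod (oblDist_nonneg hp τ) (P := fun σ => f σ = f α) rfl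

theorem oblDist_zero_pos_iff (hp : ∀ x, 0 < p x) {μ : M} :
    0 < oblDist p g f 0 μ ↔ ∃ x, g x = μ := by
  simp only [oblDist]
  rw [sum_pos_iff_of_nonneg fun x _ => ite_nonneg (hp x).le le_rfl]
  refine exists_congr fun x => ?_
  split_ifs with h <;> simp [h, hp x]

theorem oblDist_succ_pos_iff (hp : ∀ x, 0 ≤ p x) {τ : ℕ} {μ : M} :
    0 < oblDist p g f (τ + 1) μ ↔ ∃ α, f α = μ ∧ ∀ i, 0 < oblDist p g f τ (α i) := by
  simp only [oblDist]
  rw [sum_pos_iff_of_nonneg fun σ _ =>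
    ite_nonneg (prod_nonneg fun i _ => oblDist_nonneg hp τ (σ i)) le_rfl]
  refine exists_congr fun α => ?_
  split_ifs with h
  · simp [h, prod_pos_iff_of_nonneg fun i => oblDist_nonneg hp τ (α i)]
  · simp [h]

theorem oblDist_pos_congr (hp : ∀ x, 0 < p x) (hp' : ∀ x, 0 < p' x) :
    ∀ τ μ, 0 < oblDist p g f τ μ ↔ 0 < oblDist p' g f τ μ
  | 0, _ => by rw [oblDist_zero_pos_iff hp, oblDist_zero_pos_iff hp']
  | τ + 1, _ => by
    simp only [oblDist_succ_pos_iff (fun x => (hp x).le),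
      oblDist_succ_pos_iff (fun x => (hp' x).le), oblDist_pos_congr hp hp' τ]

theorem oblDist_pos_of_le (hp : ∀ x, 0 ≤ p x) (hf : Function.Surjective f) {τ₀ τ : ℕ}
    (h₀ : ∀ μ, 0 < oblDist p g f τ₀ μ) (hτ : τ₀ ≤ τ) (μ : M) : 0 < oblDist p g f τ μ := by
  induction τ, hτ using Nat.le_induction generalizing μ with
  | base => exact h₀ μ
  | succ τ _ ih =>
    obtain ⟨α, rfl⟩ := hf μ
    exact (oblDist_succ_pos_iff hp).2 ⟨α, rfl, fun i => ih _⟩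

theorem mul_pow_le_oblDist_succ_of_depEdge (hp : ∀ x, 0 ≤ p x) {τ : ℕ} {a : ℝ} (ha : 0 ≤ a)
    (haq : ∀ ξ, a ≤ oblDist p g f τ ξ) {μ ν : M} (he : DepEdge f μ ν) :
    oblDist p g f τ ν * a ^ (k - 1) ≤ oblDist p g f (τ + 1) μ := by
  obtain ⟨α, ⟨i, rfl⟩, rfl⟩ := he
  calc oblDist p g f τ (α i) * a ^ (k - 1)
      = oblDist p g f τ (α i) * ∏ _j ∈ univ.erase i, a := by simp [card_erase_of_mem]
    _ ≤ oblDist p g f τ (α i) * ∏ j ∈ univ.erase i, oblDist p g f τ (α j) := by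
        gcongr with j
        · exact oblDist_nonneg hp τ _
        · exact haq _
    _ = ∏ j, oblDist p g f τ (α j) :=
        mul_prod_erase univ (fun j => oblDist p g f τ (α j)) (mem_univ i)
    _ ≤ oblDist p g f (τ + 1) (f α) := prod_oblDist_le_oblDist_succ hp τ α

theorem mul_prod_pow_le_oblDist_of_hasPath (hp : ∀ x, 0 ≤ p x) {τ : ℕ} {a : ℕ → ℝ}
    (ha : ∀ i, 0 ≤ a i) (haq : ∀ i ξ, a i ≤ oblDist p g f (τ + i) ξ) {ν : M} :
    ∀ {j : ℕ} {μ : M}, HasPath f j μ ν →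
      oblDist p g f τ ν * ∏ i ∈ range j, a i ^ (k - 1) ≤ oblDist p g f (τ + j) μ
  | 0, _, rfl => by simp
  | j + 1, μ, ⟨ξ, he, h⟩ =>
    calc oblDist p g f τ ν * ∏ i ∈ range (j + 1), a i ^ (k - 1)
        = (oblDist p g f τ ν * ∏ i ∈ range j, a i ^ (k - 1)) * a j ^ (k - 1) := by
          rw [prod_range_succ, mul_assoc]
      _ ≤ oblDist p g f (τ + j) ξ * a j ^ (k - 1) := by
          gcongr
          · exact pow_nonneg (ha j) _
          · exact mul_prod_pow_le_oblDist_of_hasPath hp ha haq h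
      _ ≤ oblDist p g f (τ + j + 1) μ := mul_pow_le_oblDist_succ_of_depEdge hp (ha j) (haq j) he

end Distribution

section MinimalMass

variable {X M : Type} [Fintype X] [Fintype M] [DecidableEq M] {k : ℕ} {p : X → ℝ}
  {g : X → M} {f : (Fin k → M) → M}

noncomputable def oblMin (p : X → ℝ) (g : X → M) (f : (Fin k → M) → M) (τ : ℕ) : ℝ :=
  ⨅ μ, oblDist p g f τ μ

theorem oblMin_le (τ : ℕ) (μ : M) : oblMin p g f τ ≤ oblDist p g f τ μ :=
  ciInf_le (Set.finite_range _).bddBelow μ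

variable [Nonempty M]

theorem exists_oblDist_eq_oblMin (τ : ℕ) : ∃ μ, oblDist p g f τ μ = oblMin p g f τ :=
  exists_eq_ciInf_of_finite

theorem oblMin_nonneg (hp : ∀ x, 0 ≤ p x) (τ : ℕ) : 0 ≤ oblMin p g f τ :=
  le_ciInf fun μ => oblDist_nonneg hp τ μ

theorem oblMin_le_one (hp : IsPositiveDist p) (τ : ℕ) : oblMin p g f τ ≤ 1 :=
  (oblMin_le τ (Classical.arbitrary M)).trans (oblDist_le_one hp τ _)

theorem oblMin_pos {τ : ℕ} (h : ∀ μ, 0 < oblDist p g f τ μ) : 0 < oblMin p g f τ :=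
  let ⟨μ, hμ⟩ := exists_oblDist_eq_oblMin (p := p) (g := g) (f := f) τ
  hμ ▸ h μ

theorem mul_prod_oblMin_pow_le_oblMin (hp : IsPositiveDist p) {D b : ℕ} {μm : M} {η : ℝ}
    (hη : 0 ≤ η) (hreach : ∀ μ, ∃ j ≤ D, HasPath f j μ μm)
    (hμm : ∀ τ, b ≤ τ → η ≤ oblDist p g f τ μm) :
    η * ∏ i ∈ range D, oblMin p g f (b + i) ^ (k - 1) ≤ oblMin p g f (b + D) := by
  have hp₀ : ∀ x, 0 ≤ p x := fun x => (hp.1 x).le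
  obtain ⟨μ, hμ⟩ := exists_oblDist_eq_oblMin (p := p) (g := g) (f := f) (b + D)
  obtain ⟨j, hjD, hj⟩ := hreach μ
  obtain ⟨c, rfl⟩ := Nat.exists_eq_add_of_le' hjD
  have hpad : ∏ i ∈ range c, oblMin p g f (b + i) ^ (k - 1) ≤ 1 :=
    prod_le_one (fun i _ => pow_nonneg (oblMin_nonneg hp₀ _) _)
      fun i _ => pow_le_one₀ (oblMin_nonneg hp₀ _) (oblMin_le_one hp _)
  calc η * ∏ i ∈ range (c + j), oblMin p g f (b + i) ^ (k - 1)
      = η * ((∏ i ∈ range c, oblMin p g f (b + i) ^ (k - 1)) *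
          ∏ i ∈ range j, oblMin p g f (b + c + i) ^ (k - 1)) := by
        rw [prod_range_add]
        simp only [add_assoc]
    _ ≤ η * ∏ i ∈ range j, oblMin p g f (b + c + i) ^ (k - 1) := by
        gcongr
        exact mul_le_of_le_one_left
          (prod_nonneg fun i _ => pow_nonneg (oblMin_nonneg hp₀ _) _) hpad
    _ ≤ oblDist p g f (b + c) μm * ∏ i ∈ range j, oblMin p g f (b + c + i) ^ (k - 1) := by
        gcongr
        · exact prod_nonneg fun i _ => pow_nonneg (oblMin_nonneg hp₀ _) _
        · exact hμm _ (by omega)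
    _ ≤ oblDist p g f (b + c + j) μ :=
        mul_prod_pow_le_oblDist_of_hasPath hp₀ (fun _ => oblMin_nonneg hp₀ _)
          (fun _ ξ => oblMin_le _ ξ) hj
    _ = oblMin p g f (b + (c + j)) := by rw [add_assoc, hμ]

end MinimalMass

section ErrorProbability

variable {X M : Type} [Fintype X] [Fintype M] [DecidableEq M] {k : ℕ} {p₀ p₁ : X → ℝ}
  {g : X → M} {f : (Fin k → M) → M} {h : (Fin k → M) → Bool}

theorem half_mul_prod_le_oblErr_of_true (hp₀ : ∀ x, 0 ≤ p₀ x) (hp₁ : ∀ x, 0 ≤ p₁ x) (t : ℕ)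
    {σ : Fin k → M} (hσ : h σ = true) :
    1 / 2 * ∏ i, oblDist p₀ g f t (σ i) ≤ oblErr p₀ p₁ g f h t := by
  have := prod_le_sum_ite_prod (oblDist_nonneg (g := g) (f := f) hp₀ t)
    (P := fun σ => h σ = true) hσ
  have := sum_ite_prod_nonneg (oblDist_nonneg (g := g) (f := f) hp₁ t) (fun σ => h σ = false)
  unfold oblErr
  linarith

theorem half_mul_prod_le_oblErr_of_false (hp₀ : ∀ x, 0 ≤ p₀ x) (hp₁ : ∀ x, 0 ≤ p₁ x) (t : ℕ)
    {σ : Fin k → M} (hσ : h σ = false) :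
    1 / 2 * ∏ i, oblDist p₁ g f t (σ i) ≤ oblErr p₀ p₁ g f h t := by
  have := prod_le_sum_ite_prod (oblDist_nonneg (g := g) (f := f) hp₁ t)
    (P := fun σ => h σ = false) hσ
  have := sum_ite_prod_nonneg (oblDist_nonneg (g := g) (f := f) hp₀ t) (fun σ => h σ = true)
  unfold oblErr
  linarith

theorem half_le_oblErr_of_forall_false (hp₀ : ∀ x, 0 ≤ p₀ x) (hp₁ : IsPositiveDist p₁)
    (t : ℕ) (hh : ∀ σ, h σ = false) : 1 / 2 ≤ oblErr p₀ p₁ g f h t := by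
  have hall : ∑ σ : Fin k → M, (if h σ = false then ∏ i, oblDist p₁ g f t (σ i) else 0) = 1 := by
    simp [hh, ← Fintype.sum_pow, sum_oblDist hp₁.2 t]
  have := sum_ite_prod_nonneg (oblDist_nonneg (g := g) (f := f) hp₀ t) (fun σ => h σ = true)
  unfold oblErr
  linarith

theorem half_mul_pow_le_oblErr (hp₀ : ∀ x, 0 ≤ p₀ x) (hp₁ : IsPositiveDist p₁) {t : ℕ} {a : ℝ}
    (ha : 0 ≤ a) (ha₁ : a ≤ 1) (haq : ∀ μ, a ≤ oblDist p₀ g f t μ) :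
    1 / 2 * a ^ k ≤ oblErr p₀ p₁ g f h t := by
  by_cases hh : ∃ σ, h σ = true
  · obtain ⟨σ, hσ⟩ := hh
    calc 1 / 2 * a ^ k = 1 / 2 * ∏ _i : Fin k, a := by simp
      _ ≤ 1 / 2 * ∏ i, oblDist p₀ g f t (σ i) := by gcongr with i; exact haq _
      _ ≤ oblErr p₀ p₁ g f h t :=
        half_mul_prod_le_oblErr_of_true hp₀ (fun x => (hp₁.1 x).le) t hσ
  · simp only [not_exists, Bool.not_eq_true] at hh
    calc 1 / 2 * a ^ k ≤ 1 / 2 := by have := pow_le_one₀ (n := k) ha ha₁; linarith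
      _ ≤ oblErr p₀ p₁ g f h t :=
        half_le_oblErr_of_forall_false hp₀ hp₁ t hh

theorem half_mul_exp_le_oblErr_of_exp_le_oblMin [Nonempty M] (hp₀ : IsPositiveDist p₀)
    (hp₁ : IsPositiveDist p₁) {A r : ℝ} (hA : 0 ≤ A) (hr : 1 ≤ r) {t : ℕ}
    (hmin : exp (-A * r ^ t) ≤ oblMin p₀ g f t) :
    1 / 2 * exp (-(k * A) * r ^ (t + 1)) ≤ oblErr p₀ p₁ g f h t := by
  have hp₀' : ∀ x, 0 ≤ p₀ x := fun x => (hp₀.1 x).le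
  have hrt := mul_le_mul_of_nonneg_left (pow_le_pow_right₀ hr (Nat.le_add_right t 1))
    (mul_nonneg (Nat.cast_nonneg k) hA)
  calc 1 / 2 * exp (-(k * A) * r ^ (t + 1)) ≤ 1 / 2 * exp (-A * r ^ t) ^ k := by
        gcongr 1 / 2 * ?_
        rw [← exp_nat_mul]
        exact exp_le_exp.2 (by linarith)
    _ ≤ 1 / 2 * oblMin p₀ g f t ^ k := by gcongr
    _ ≤ oblErr p₀ p₁ g f h t :=
        half_mul_pow_le_oblErr hp₀' hp₁ (oblMin_nonneg hp₀' t) (oblMin_le_one hp₀ t) (oblMin_le t)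

theorem oblErr_pos (hp₀ : IsPositiveDist p₀) (hp₁ : IsPositiveDist p₁) (t : ℕ) :
    0 < oblErr p₀ p₁ g f h t := by
  obtain ⟨μ, -, hμ⟩ : ∃ μ ∈ univ, (0 : ℝ) < oblDist p₀ g f t μ :=
    exists_lt_of_sum_lt (by simp [sum_oblDist hp₀.2 t])
  have hμ₁ := (oblDist_pos_congr hp₀.1 hp₁.1 t μ).1 hμ
  have hp₀' : ∀ x, 0 ≤ p₀ x := fun x => (hp₀.1 x).le
  have hp₁' : ∀ x, 0 ≤ p₁ x := fun x => (hp₁.1 x).le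
  cases hσ : h (fun _ => μ)
  · exact (mul_pos one_half_pos (prod_pos fun i _ => hμ₁)).trans_le
      (half_mul_prod_le_oblErr_of_false hp₀' hp₁' t hσ)
  · exact (mul_pos one_half_pos (prod_pos fun i _ => hμ)).trans_le
      (half_mul_prod_le_oblErr_of_true hp₀' hp₁' t hσ)

end ErrorProbability

section Recursion

theorem neg_log_le_of_mul_prod_pow_le {η y : ℝ} {x : ℕ → ℝ} {D n : ℕ} (hη : 0 < η)
    (hx : ∀ i < D, 0 < x i) (h : η * ∏ i ∈ range D, x i ^ n ≤ y) :
    -log y ≤ -log η + n * ∑ i ∈ range D, -log (x i) := by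
  have hP : 0 < ∏ i ∈ range D, x i ^ n := prod_pos fun i hi => pow_pos (hx i (mem_range.1 hi)) n
  have hlog := log_le_log (mul_pos hη hP) h
  rw [log_mul hη.ne' hP.ne', log_prod fun i hi => (pow_pos (hx i (mem_range.1 hi)) n).ne'] at hlog
  simp only [Real.log_pow, ← mul_sum] at hlog
  rw [sum_neg_distrib]
  linarith

theorem exists_le_mul_pow_of_le_add_mul_sum {z : ℕ → ℝ} {B c r : ℝ} {D b : ℕ}
    (hz : ∀ n, 0 ≤ z n) (hc : 0 ≤ c) (hr : 1 ≤ r) (hgap : c * ∑ i ∈ range D, r ^ i < r ^ D)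
    (hrec : ∀ n, b ≤ n → z (n + D) ≤ B + c * ∑ i ∈ range D, z (n + i)) :
    ∃ A, 0 ≤ A ∧ ∀ n, z n ≤ A * r ^ n := by
  set γ := r ^ D - c * ∑ i ∈ range D, r ^ i
  have hγ : 0 < γ := sub_pos.2 hgap
  set A := |B| / γ + ∑ n ∈ range (b + D), z n
  have hA : 0 ≤ A := add_nonneg (div_nonneg (abs_nonneg B) hγ.le) (sum_nonneg fun n _ => hz n)
  have hAγ : B ≤ A * γ :=
    calc B ≤ |B| := le_abs_self B
      _ = |B| / γ * γ := (div_mul_cancel₀ _ hγ.ne').symm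
      _ ≤ A * γ := by gcongr; exact le_add_of_nonneg_right (sum_nonneg fun n _ => hz n)
  refine ⟨A, hA, fun n => ?_⟩
  induction n using Nat.strong_induction_on with
  | _ n ih =>
  rcases lt_or_ge n (b + D) with hn | hn
  · calc z n ≤ ∑ m ∈ range (b + D), z m := single_le_sum (fun m _ => hz m) (mem_range.2 hn)
      _ ≤ A := le_add_of_nonneg_left (div_nonneg (abs_nonneg B) hγ.le)
      _ ≤ A * r ^ n := le_mul_of_one_le_right hA (one_le_pow₀ hr)
  obtain ⟨m, rfl⟩ : ∃ m, n = m + D := ⟨n - D, by omega⟩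
  calc z (m + D) ≤ B + c * ∑ i ∈ range D, z (m + i) := hrec m (by omega)
    _ ≤ A * γ * r ^ m + c * ∑ i ∈ range D, A * r ^ (m + i) := by
        gcongr with i hi
        · exact hAγ.trans (le_mul_of_one_le_right (mul_nonneg hA hγ.le) (one_le_pow₀ hr))
        · exact ih _ (by simp at hi; omega)
    _ = A * r ^ (m + D) := by
        simp only [γ, pow_add, ← mul_sum, mul_comm (r ^ m), ← mul_assoc, ← sum_mul]
        ring

end Recursion

section Exponent

/-- The exponent `ρ` of the theorem, with `D = m - 1`. -/
noncomputable def decayExponent (k : ℝ) (D : ℕ) : ℝ :=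
  1 + log (1 - (k ^ D)⁻¹) / (D * log k)

variable {k : ℝ} {D : ℕ}

theorem decayExponent_lt_one (hk : 1 < k) (hD : D ≠ 0) : decayExponent k D < 1 := by
  have hkD : 1 < k ^ D := one_lt_pow₀ hk hD
  have hlog : log (1 - (k ^ D)⁻¹) < 0 :=
    log_neg (sub_pos.2 (inv_lt_one_of_one_lt₀ hkD)) (sub_lt_self _ (by positivity))
  have hden : 0 < (D : ℝ) * log k := mul_pos (by positivity) (log_pos hk)
  unfold decayExponent
  linarith [div_neg_of_neg_of_pos hlog hden]

theorem rpow_decayExponent_pow (hk : 1 < k) (hD : D ≠ 0) :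
    (k ^ decayExponent k D) ^ D = k ^ D - 1 := by
  have hk₀ : 0 < k := by linarith
  have hL : 0 < 1 - (k ^ D)⁻¹ := sub_pos.2 (inv_lt_one_of_one_lt₀ (one_lt_pow₀ hk hD))
  have hlogk : log k ≠ 0 := (log_pos hk).ne'
  calc (k ^ decayExponent k D) ^ D = k ^ (decayExponent k D * D) := by
        rw [← rpow_natCast, ← rpow_mul hk₀.le]
    _ = exp (D * log k + log (1 - (k ^ D)⁻¹)) := by
        rw [rpow_def_of_pos hk₀]
        congr 1
        unfold decayExponent
        field_simp
    _ = k ^ D * (1 - (k ^ D)⁻¹) := by rw [exp_add, exp_log hL, exp_nat_mul, exp_log hk₀]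
    _ = k ^ D - 1 := by rw [mul_sub, mul_inv_cancel₀ (by positivity), mul_one]

theorem one_le_rpow_decayExponent (hk : 2 ≤ k) (hD : D ≠ 0) : 1 ≤ k ^ decayExponent k D := by
  have hpow := rpow_decayExponent_pow (by linarith : 1 < k) hD
  have hkD : k ≤ k ^ D := le_self_pow₀ (by linarith) hD
  rw [← one_le_pow_iff_of_nonneg (rpow_nonneg (by linarith) _) hD, hpow]
  linarith

theorem sub_one_mul_sum_rpow_decayExponent_lt (hk : 1 < k) (hD : 2 ≤ D) :
    (k - 1) * ∑ i ∈ range D, (k ^ decayExponent k D) ^ i < (k ^ decayExponent k D) ^ D := by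
  set r := k ^ decayExponent k D
  have hr₀ : 0 ≤ r := rpow_nonneg (by linarith) _
  have hpow : r ^ D = k ^ D - 1 := rpow_decayExponent_pow hk (by omega)
  have hrk : r < k := by
    rw [← pow_lt_pow_iff_left₀ hr₀ (by linarith) (by omega : D ≠ 0), hpow]
    linarith
  have hsum : ∑ i ∈ range D, r ^ i < ∑ i ∈ range D, k ^ i :=
    sum_lt_sum (fun i _ => pow_le_pow_left₀ hr₀ hrk.le i)
      ⟨1, mem_range.2 (by omega), by simpa using hrk⟩
  calc (k - 1) * ∑ i ∈ range D, r ^ i < (k - 1) * ∑ i ∈ range D, k ^ i :=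
        mul_lt_mul_of_pos_left hsum (by linarith)
    _ = r ^ D := by rw [hpow, mul_comm, geom_sum_mul]

end Exponent

theorem exists_exp_neg_mul_le_of_eventually {e u : ℕ → ℝ} (he : ∀ t, 0 < e t)
    (hu : ∀ t, 1 ≤ u t) {c C₀ : ℝ} (hc : 0 < c) {N : ℕ}
    (hN : ∀ t, N ≤ t → c * exp (-C₀ * u t) ≤ e t) :
    ∃ C, ∀ t, exp (-C * u t) ≤ e t := by
  set C := |C₀| + |log c| + ∑ t ∈ range N, |log (e t)|
  have hS : 0 ≤ ∑ t ∈ range N, |log (e t)| := sum_nonneg fun _ _ => abs_nonneg _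
  have hC : 0 ≤ C := by positivity
  have hCC₀ : |log c| ≤ C - C₀ := by linarith [le_abs_self C₀]
  refine ⟨C, fun t => ?_⟩
  rcases lt_or_ge t N with ht | ht
  · have hlog : |log (e t)| ≤ C := by
      have := single_le_sum (f := fun t => |log (e t)|) (fun _ _ => abs_nonneg _)
        (mem_range.2 ht)
      linarith [abs_nonneg C₀, abs_nonneg (log c)]
    calc exp (-C * u t) ≤ exp (log (e t)) := by
          gcongr
          linarith [le_mul_of_one_le_right hC (hu t), neg_abs_le (log (e t))]
      _ = e t := exp_log (he t)
  · calc exp (-C * u t) ≤ exp (log c + -C₀ * u t) := by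
          gcongr
          linarith [le_mul_of_one_le_right ((abs_nonneg _).trans hCC₀) (hu t),
            neg_abs_le (log c)]
      _ = c * exp (-C₀ * u t) := by rw [exp_add, exp_log hc]
      _ ≤ e t := hN t ht

theorem exists_exp_neg_mul_pow_le_oblMin {X M : Type} [Fintype X] [Fintype M] [DecidableEq M]
    [Nonempty M] {k : ℕ} {p : X → ℝ} {g : X → M} {f : (Fin k → M) → M} (hp : IsPositiveDist p)
    (hk : 1 ≤ k) {D b : ℕ} {μm : M} {η r : ℝ} (hη : 0 < η) (hr : 1 ≤ r)
    (hgap : ((k : ℝ) - 1) * ∑ i ∈ range D, r ^ i < r ^ D)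
    (hreach : ∀ μ, ∃ j ≤ D, HasPath f j μ μm)
    (hpos : ∀ τ, b ≤ τ → ∀ μ, 0 < oblDist p g f τ μ)
    (hμm : ∀ τ, b ≤ τ → η ≤ oblDist p g f τ μm) :
    ∃ A, 0 ≤ A ∧ ∀ t, b ≤ t → exp (-A * r ^ t) ≤ oblMin p g f t := by
  have hp₀ : ∀ x, 0 ≤ p x := fun x => (hp.1 x).le
  have hz : ∀ τ, 0 ≤ -log (oblMin p g f τ) := fun τ =>
    neg_nonneg.2 (log_nonpos (oblMin_nonneg hp₀ τ) (oblMin_le_one hp τ))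
  obtain ⟨A, hA, hzA⟩ := exists_le_mul_pow_of_le_add_mul_sum (B := -log η) (b := b) hz
    (sub_nonneg.2 (by exact_mod_cast hk)) hr hgap fun n hn => by
      have := neg_log_le_of_mul_prod_pow_le hη
        (fun i _ => oblMin_pos (hpos (n + i) (by omega)))
        (mul_prod_oblMin_pow_le_oblMin hp hη.le hreach fun τ hτ => hμm τ (by omega))
      rwa [Nat.cast_sub hk, Nat.cast_one] at this
  refine ⟨A, hA, fun t ht => ?_⟩
  rw [← exp_log (oblMin_pos (hpos t ht))]
  exact exp_le_exp.2 (by linarith [hzA t])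

theorem node_oblivious_subexponential_lower_bound_card_general
    (X M : Type) [Fintype X] [Fintype M] [DecidableEq M]
    (k : ℕ) (hk : 2 ≤ k) (hM : 3 ≤ Fintype.card M)
    (p₀ p₁ : X → ℝ) (hp₀ : IsPositiveDist p₀) (hp₁ : IsPositiveDist p₁)
    (g : X → M) (f : (Fin k → M) → M) (h : (Fin k → M) → Bool)
    (hA1 : ∀ μ ν : M, μ ≠ ν → ∃ n, HasPath f n μ ν)
    (τ₀ : ℕ) (hA2 : ∀ μ : M, 0 < oblDist p₀ g f τ₀ μ)
    (μm μp : M) (η : ℝ) (hη : 0 < η) (τd : ℕ)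
    (hA3 : ∀ τ, τd < τ → η < oblDist p₀ g f τ μm ∧ η < oblDist p₁ g f τ μp) :
    1 + Real.log (1 - ((k : ℝ) ^ (Fintype.card M - 1))⁻¹) /
        ((Fintype.card M - 1 : ℕ) * Real.log k) < 1 ∧
    ∃ C : ℝ, ∀ t : ℕ,
      Real.exp (-C * ((k : ℝ) ^ (t + 1)) ^
          (1 + Real.log (1 - ((k : ℝ) ^ (Fintype.card M - 1))⁻¹) /
            ((Fintype.card M - 1 : ℕ) * Real.log k))) ≤
        oblErr p₀ p₁ g f h t := by
  set D := Fintype.card M - 1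
  have hk₁ : (1 : ℝ) < k := by exact_mod_cast hk
  have : Nonempty M := Fintype.card_pos_iff.1 (by omega)
  refine ⟨decayExponent_lt_one hk₁ (by omega), ?_⟩
  show ∃ C : ℝ, ∀ t : ℕ,
    exp (-C * ((k : ℝ) ^ (t + 1)) ^ decayExponent k D) ≤ oblErr p₀ p₁ g f h t
  set r := (k : ℝ) ^ decayExponent k D
  have hr : 1 ≤ r := one_le_rpow_decayExponent (by exact_mod_cast hk) (by omega)
  obtain ⟨A, hA, hmin⟩ := exists_exp_neg_mul_pow_le_oblMin hp₀ (by omega) (b := max τ₀ (τd + 1))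
    hη hr (sub_one_mul_sum_rpow_decayExponent_lt hk₁ (by omega))
    (fun μ => exists_hasPath_le_card_sub_one hA1 μ μm)
    (fun τ hτ => oblDist_pos_of_le (fun x => (hp₀.1 x).le)
      (surjective_of_forall_hasPath (by omega) hA1) hA2 (by omega))
    (fun τ hτ => (hA3 τ (by omega)).1.le)
  obtain ⟨C, hC⟩ := exists_exp_neg_mul_le_of_eventually (u := fun t => r ^ (t + 1))
    (oblErr_pos (g := g) (f := f) (h := h) hp₀ hp₁) (fun t => one_le_pow₀ hr) one_half_pos
    fun t ht => half_mul_exp_le_oblErr_of_exp_le_oblMin hp₀ hp₁ hA hr (hmin t ht)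
  exact ⟨C, fun t => by rw [← rpow_pow_comm (Nat.cast_nonneg k)]; exact hC t⟩

/-- **Corollary: subexponential decay with exponent depending only on `m = |M|`.**
Fix the finite message alphabet `M`, `m = |M| ≥ 3`, and `k ≥ 2`.  For any
deterministic node-oblivious rule vector `(f, g, h)` satisfying the three
irreducibility assumptions, there is a constant `C < ∞` (depending on `f`, `m`, `k`)
such that for every total depth `t + 1`,
`P(σ_root ≠ s) ≥ exp (-C n^ρ)` with `n = k^(t+1)` the number of private signals and
`ρ = 1 + log (1 - k^{-(m-1)}) / ((m-1) log k) < 1`. -/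
theorem node_oblivious_subexponential_lower_bound_card
    (X M : Type) [Fintype X] [Fintype M] [DecidableEq M]
    (k : ℕ) (hk : 2 ≤ k) (hM : 3 ≤ Fintype.card M)
    (p₀ p₁ : X → ℝ) (hp₀ : IsPositiveDist p₀) (hp₁ : IsPositiveDist p₁)
    (g : X → M) (f : (Fin k → M) → M) (h : (Fin k → M) → Bool)
    (hA1 : ∀ μ ν : M, μ ≠ ν → ∃ n, HasPath f n μ ν)
    (τ₀ : ℕ) (hτ₀ : 0 < τ₀) (hA2 : ∀ μ : M, 0 < oblDist p₀ g f τ₀ μ)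
    (μm μp : M) (η : ℝ) (hη : 0 < η) (τd : ℕ)
    (hA3 : ∀ τ, τd < τ → η < oblDist p₀ g f τ μm ∧ η < oblDist p₁ g f τ μp) :
    1 + Real.log (1 - ((k : ℝ) ^ (Fintype.card M - 1))⁻¹) /
        ((Fintype.card M - 1 : ℕ) * Real.log k) < 1 ∧
    ∃ C : ℝ, ∀ t : ℕ,
      Real.exp (-C * ((k : ℝ) ^ (t + 1)) ^
          (1 + Real.log (1 - ((k : ℝ) ^ (Fintype.card M - 1))⁻¹) /
            ((Fintype.card M - 1 : ℕ) * Real.log k))) ≤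
        oblErr p₀ p₁ g f h t :=
  node_oblivious_subexponential_lower_bound_card_general X M k hk hM p₀ p₁ hp₀ hp₁ g f h hA1 τ₀ hA2
    μm μp η hη τd hA3
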